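/- Fix b > 0 and set r := 1/(2b). Let p_0, p_1 be probability densities on [0,1] (with respect to Lebesgue measure) that are not equal almost everywhere, and for i = 0,1 define q_i(y) := r·∫_{max(y−b,0)}^{min(y+b,1)} p_i(x) dx for y ∈ [−b, 1+b]. Then for every t ∈ (0,1), writing q_t := t·q_0 + (1−t)·q_1, the output differential entropy is strictly concave: −∫_{−b}^{1+b} q_t(y) log q_t(y) dy > t·(−∫_{−b}^{1+b} q_0(y) log q_0(y) dy) + (1−t)·(−∫_{−b}^{1+b} q_1(y) log q_1(y) dy), with the convention 0·log 0 = 0. -/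
import Mathlib


open MeasureTheory Real Set

/-- Strict concavity of the output differential entropy of the
additive uniform noise channel in the input density. `p 0, p 1` are probability
densities on `[0,1]` that are not a.e. equal; `q i` is the induced output density,
and for `t ∈ (0,1)` the entropy of the mixed output strictly exceeds the mixture of
the entropies (with the convention `0·log 0 = 0`, encoded by `Real.negMulLog`). -/
theorem stmt1 (b : ℝ) (hb : 0 < b) (r : ℝ) (hr : r = 1 / (2 * b))
    (p : Fin 2 → ℝ → ℝ)
    (hmeas : ∀ i, Measurable (p i))
    (hnn : ∀ i, ∀ x ∈ Icc (0:ℝ) 1, 0 ≤ p i x)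
    (hint : ∀ i, (∫ x in (0:ℝ)..1, p i x) = 1)
    (hne : ¬ (p 0 =ᵐ[volume.restrict (Icc (0:ℝ) 1)] p 1))
    (q : Fin 2 → ℝ → ℝ)
    (hq : ∀ i y, q i y = r * ∫ x in (max (y - b) 0)..(min (y + b) 1), p i x)
    (t : ℝ) (ht : t ∈ Ioo (0:ℝ) 1) :
    (∫ y in (-b)..(1 + b), negMulLog (t * q 0 y + (1 - t) * q 1 y))
      > t * (∫ y in (-b)..(1 + b), negMulLog (q 0 y))
        + (1 - t) * (∫ y in (-b)..(1 + b), negMulLog (q 1 y)) := by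
  obtain ⟨ht0, ht1⟩ := ht
  have hr0 : 0 < r := by rw [hr]; positivity
  -- the densities are integrable
  have hpint : ∀ i, IntegrableOn (p i) (Ioc (0:ℝ) 1) := by
    intro i
    by_contra h
    have h1 := hint i
    rw [intervalIntegral.integral_of_le (by norm_num : (0:ℝ) ≤ 1),
      MeasureTheory.integral_undef h] at h1
    norm_num at h1
  set g : Fin 2 → ℝ → ℝ := fun i => (Icc (0:ℝ) 1).indicator (p i) with hgdef
  have hgmeas : ∀ i, Measurable (g i) := fun i => (hmeas i).indicator measurableSet_Icc
  have hgnn : ∀ i x, 0 ≤ g i x := by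
    intro i x
    by_cases hx : x ∈ Icc (0:ℝ) 1
    · simpa [hgdef, Set.indicator_of_mem hx] using hnn i x hx
    · simp [hgdef, Set.indicator_of_notMem hx]
  have hgint : ∀ i, Integrable (g i) := by
    intro i
    rw [hgdef]
    simp only []
    rw [integrable_indicator_iff measurableSet_Icc]
    exact (integrableOn_Icc_iff_integrableOn_Ioc).2 (hpint i)
  set G : Fin 2 → ℝ → ℝ := fun i u => ∫ x in (0:ℝ)..u, g i x with hGdef
  have hgii : ∀ i (a c : ℝ), IntervalIntegrable (g i) volume a c :=
    fun i a c => (hgint i).intervalIntegrable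
  have hGcont : ∀ i, Continuous (G i) := fun i => (hgint i).continuous_primitive 0
  -- converting interval integrals of `p` into differences of the primitive `G`
  have hconv : ∀ i (A C : ℝ), 0 ≤ A → C ≤ 1 → A ≤ C →
      (∫ x in A..C, p i x) = G i C - G i A := by
    intro i A C h0 h1 hAC
    rw [show G i C - G i A = ∫ x in A..C, g i x from
      intervalIntegral.integral_interval_sub_left (hgii i 0 C) (hgii i 0 A)]
    apply intervalIntegral.integral_congr
    intro x hx
    rw [uIcc_of_le hAC] at hx
    have hx' : x ∈ Icc (0:ℝ) 1 := ⟨le_trans h0 hx.1, le_trans hx.2 h1⟩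
    simp [hgdef, Set.indicator_of_mem hx']
  have hAB : ∀ y ∈ Icc (-b) (1+b),
      0 ≤ max (y-b) 0 ∧ min (y+b) 1 ≤ 1 ∧ max (y-b) 0 ≤ min (y+b) 1 := by
    intro y hy
    obtain ⟨h1, h2⟩ := hy
    refine ⟨le_max_right _ _, min_le_right _ _, max_le ?_ ?_⟩
    · exact le_min (by linarith) (by linarith)
    · exact le_min (by linarith) (by norm_num)
  have hqG : ∀ i, ∀ y ∈ Icc (-b) (1+b),
      q i y = r * (G i (min (y+b) 1) - G i (max (y-b) 0)) := by
    intro i y hy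
    obtain ⟨h0A, hB1, hABle⟩ := hAB y hy
    rw [hq, hconv i _ _ h0A hB1 hABle]
  have hqnn : ∀ i, ∀ y ∈ Icc (-b) (1+b), 0 ≤ q i y := by
    intro i y hy
    obtain ⟨h0A, hB1, hABle⟩ := hAB y hy
    rw [hq]
    apply mul_nonneg hr0.le
    exact intervalIntegral.integral_nonneg hABle
      (fun x hx => hnn i x ⟨le_trans h0A hx.1, le_trans hx.2 hB1⟩)
  have hqcont : ∀ i, ContinuousOn (q i) (Icc (-b) (1+b)) := by
    intro i
    have hc : Continuous (fun y : ℝ => r * (G i (min (y+b) 1) - G i (max (y-b) 0))) := by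
      apply continuous_const.mul
      exact ((hGcont i).comp ((continuous_id.add continuous_const).min continuous_const)).sub
        ((hGcont i).comp ((continuous_id.sub continuous_const).max continuous_const))
    exact hc.continuousOn.congr (fun y hy => hqG i y hy)
  -- there is a point in the open interval where the two output densities differ
  have hex : ∃ y ∈ Ioo (-b) (1+b), q 0 y ≠ q 1 y := by
    by_contra hcon
    push_neg at hcon
    have key : ∀ u ∈ Ioc (0:ℝ) 1,
        G 0 u - G 1 u = G 0 (max (u - 2*b) 0) - G 1 (max (u - 2*b) 0) := by
      intro u hu
      have hy : (u - b) ∈ Ioo (-b) (1+b) := ⟨by linarith [hu.1], by linarith [hu.2]⟩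
      have hqe := hcon _ hy
      rw [hq 0, hq 1] at hqe
      have hqe' := mul_left_cancel₀ (ne_of_gt hr0) hqe
      have e1 : u - b + b = u := by ring
      have e2 : u - b - b = u - 2*b := by ring
      rw [e1, e2, min_eq_left hu.2] at hqe'
      have hA0 : 0 ≤ max (u - 2*b) 0 := le_max_right _ _
      have hAu : max (u - 2*b) 0 ≤ u := max_le (by linarith) hu.1.le
      rw [hconv 0 _ _ hA0 hu.2 hAu, hconv 1 _ _ hA0 hu.2 hAu] at hqe'
      linarith
    have hFzero : ∀ n : ℕ, ∀ u ∈ Icc (0:ℝ) 1, u ≤ 2*b*n → G 0 u = G 1 u := by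
      intro n
      induction n with
      | zero =>
        intro u hu hun
        have hu0 : u = 0 := le_antisymm (by simpa using hun) hu.1
        subst hu0
        simp [hGdef]
      | succ n ih =>
        intro u hu hun
        rcases eq_or_lt_of_le hu.1 with h0 | h0
        · rw [← h0]; simp [hGdef]
        · have hu' : u ∈ Ioc (0:ℝ) 1 := ⟨h0, hu.2⟩
          have ha : max (u - 2*b) 0 ∈ Icc (0:ℝ) 1 :=
            ⟨le_max_right _ _, max_le (by linarith [hu.2]) (by norm_num)⟩
          have han : max (u - 2*b) 0 ≤ 2*b*n := by
            apply max_le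
            · push_cast at hun ⊢
              nlinarith
            · positivity
          have h1 := key u hu'
          have h2 := ih _ ha han
          linarith
    have hG01 : ∀ u ∈ Icc (0:ℝ) 1, G 0 u = G 1 u := by
      obtain ⟨n, hn⟩ := exists_nat_ge (1 / (2*b))
      intro u hu
      apply hFzero n u hu
      rw [div_le_iff₀ (by positivity)] at hn
      nlinarith [hu.2]
    have hGneg : ∀ i (u : ℝ), u ≤ 0 → G i u = 0 := by
      intro i u hu
      have h0 : ∀ᵐ (x : ℝ), x ≠ 0 := by
        rw [ae_iff]
        simpa [not_not, Set.setOf_eq_eq_singleton] using measure_singleton (0:ℝ)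
      have hz : (∫ x in u..0, g i x) = ∫ x in u..0, (0:ℝ) := by
        apply intervalIntegral.integral_congr_ae
        filter_upwards [h0] with x hx0 hx
        rw [uIoc_of_le hu] at hx
        have hnotin : x ∉ Icc (0:ℝ) 1 := by
          intro hmem
          exact hx0 (le_antisymm hx.2 hmem.1)
        simp [hgdef, Set.indicator_of_notMem hnotin]
      have hsymm := intervalIntegral.integral_symm (0:ℝ) u (f := g i) (μ := volume)
      have h2 : (∫ x in u..0, g i x) = 0 := by rw [hz]; simp
      simp only [hGdef]
      rw [h2] at hsymm
      linarith
    have hGone : ∀ i (u : ℝ), 1 ≤ u → G i u = G i 1 := by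
      intro i u hu
      have hsub : G i u - G i 1 = ∫ x in (1:ℝ)..u, g i x :=
        intervalIntegral.integral_interval_sub_left (hgii i 0 u) (hgii i 0 1)
      have hz : (∫ x in (1:ℝ)..u, g i x) = ∫ x in (1:ℝ)..u, (0:ℝ) := by
        apply intervalIntegral.integral_congr_ae
        apply Filter.Eventually.of_forall
        intro x hx
        rw [uIoc_of_le hu] at hx
        have hnotin : x ∉ Icc (0:ℝ) 1 := fun hmem => absurd hmem.2 (not_le.2 hx.1)
        simp [hgdef, Set.indicator_of_notMem hnotin]
      rw [hz] at hsub
      simp at hsub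
      linarith
    have hGall : ∀ u, G 0 u = G 1 u := by
      intro u
      rcases le_or_gt u 0 with h | h
      · rw [hGneg 0 u h, hGneg 1 u h]
      · rcases le_or_gt u 1 with h' | h'
        · exact hG01 u ⟨h.le, h'⟩
        · rw [hGone 0 u h'.le, hGone 1 u h'.le]
          exact hG01 1 ⟨by norm_num, le_refl 1⟩
    set μ : Fin 2 → Measure ℝ :=
      fun i => volume.withDensity (fun x => ENNReal.ofReal (g i x)) with hμdef
    have hμIoc : ∀ i (a c : ℝ), a < c → μ i (Ioc a c) = ENNReal.ofReal (G i c - G i a) := by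
      intro i a c hac
      rw [hμdef]
      simp only []
      rw [withDensity_apply _ measurableSet_Ioc,
        ← ofReal_integral_eq_lintegral_ofReal ((hgint i).integrableOn)
          (Filter.Eventually.of_forall (fun x => hgnn i x))]
      congr 1
      rw [← intervalIntegral.integral_of_le hac.le]
      exact (intervalIntegral.integral_interval_sub_left (hgii i 0 c) (hgii i 0 a)).symm
    have hμuniv : ∀ i, μ i univ = ENNReal.ofReal 1 := by
      intro i
      rw [hμdef]
      simp only []
      rw [withDensity_apply _ MeasurableSet.univ, Measure.restrict_univ,
        ← ofReal_integral_eq_lintegral_ofReal (hgint i)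
          (Filter.Eventually.of_forall (fun x => hgnn i x))]
      congr 1
      rw [hgdef]
      simp only []
      rw [MeasureTheory.integral_indicator measurableSet_Icc,
        MeasureTheory.integral_Icc_eq_integral_Ioc,
        ← intervalIntegral.integral_of_le (by norm_num : (0:ℝ) ≤ 1)]
      exact hint i
    have hfin : ∀ i, IsFiniteMeasure (μ i) := by
      intro i
      constructor
      rw [hμuniv i]
      exact ENNReal.ofReal_lt_top
    haveI := hfin 0
    haveI := hfin 1
    have hμeq : μ 0 = μ 1 := by
      apply MeasureTheory.Measure.ext_of_Ioc_finite (μ 0) (μ 1) (by rw [hμuniv 0, hμuniv 1])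
      intro a c hac
      rw [hμIoc 0 a c hac, hμIoc 1 a c hac, hGall a, hGall c]
    have hgae : g 0 =ᵐ[volume] g 1 := by
      have h := (withDensity_eq_iff_of_sigmaFinite
        ((ENNReal.measurable_ofReal.comp (hgmeas 0)).aemeasurable)
        ((ENNReal.measurable_ofReal.comp (hgmeas 1)).aemeasurable)).1 hμeq
      filter_upwards [h] with x hx
      simp only [Function.comp_apply] at hx
      have h' := congrArg ENNReal.toReal hx
      rwa [ENNReal.toReal_ofReal (hgnn 0 x), ENNReal.toReal_ofReal (hgnn 1 x)] at h'
    apply hne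
    have h0 : p 0 =ᵐ[volume.restrict (Icc (0:ℝ) 1)] g 0 :=
      (indicator_ae_eq_restrict measurableSet_Icc).symm
    have h1 : g 1 =ᵐ[volume.restrict (Icc (0:ℝ) 1)] p 1 :=
      indicator_ae_eq_restrict measurableSet_Icc
    have hgae' : g 0 =ᵐ[volume.restrict (Icc (0:ℝ) 1)] g 1 := ae_restrict_of_ae hgae
    exact h0.trans (hgae'.trans h1)
  -- set up the pointwise concavity gap function
  obtain ⟨y0, hy0mem, hy0ne⟩ := hex
  have hy0mem' : y0 ∈ Icc (-b) (1+b) := Ioo_subset_Icc_self hy0mem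
  have hbI : (-b : ℝ) ≤ 1 + b := by linarith
  set h : ℝ → ℝ := fun y => negMulLog (t * q 0 y + (1 - t) * q 1 y) -
    (t * negMulLog (q 0 y) + (1 - t) * negMulLog (q 1 y)) with hhdef
  have hmixcont : ContinuousOn (fun y => negMulLog (t * q 0 y + (1 - t) * q 1 y))
      (Icc (-b) (1+b)) :=
    continuous_negMulLog.comp_continuousOn
      ((continuousOn_const.mul (hqcont 0)).add (continuousOn_const.mul (hqcont 1)))
  have hcont0 : ∀ i, ContinuousOn (fun y => negMulLog (q i y)) (Icc (-b) (1+b)) :=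
    fun i => continuous_negMulLog.comp_continuousOn (hqcont i)
  have hhcont : ContinuousOn h (Icc (-b) (1+b)) :=
    hmixcont.sub ((continuousOn_const.mul (hcont0 0)).add (continuousOn_const.mul (hcont0 1)))
  have hhnn : ∀ y ∈ Icc (-b) (1+b), 0 ≤ h y := by
    intro y hy
    have h0 := hqnn 0 y hy
    have h1 := hqnn 1 y hy
    have hc := concaveOn_negMulLog.2 (mem_Ici.2 h0) (mem_Ici.2 h1) ht0.le
      (by linarith : (0:ℝ) ≤ 1 - t) (by ring)
    simp only [smul_eq_mul] at hc
    simp only [hhdef]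
    linarith
  have hy0pos : 0 < h y0 := by
    have h0 := hqnn 0 y0 hy0mem'
    have h1 := hqnn 1 y0 hy0mem'
    have hc := strictConcaveOn_negMulLog.2 (mem_Ici.2 h0) (mem_Ici.2 h1) hy0ne ht0
      (by linarith : (0:ℝ) < 1 - t) (by ring)
    simp only [smul_eq_mul] at hc
    simp only [hhdef]
    linarith
  -- find a small interval around y0 where h is large
  have hcay0 : ContinuousAt h y0 :=
    hhcont.continuousAt (Icc_mem_nhds hy0mem.1 hy0mem.2)
  have hnhds : h ⁻¹' Ioi (h y0 / 2) ∈ nhds y0 :=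
    hcay0 (Ioi_mem_nhds (half_lt_self hy0pos))
  obtain ⟨l, u, hy0lu, hsub⟩ := mem_nhds_iff_exists_Ioo_subset.1 hnhds
  set c := max l (-b) with hcdef
  set d := min u (1+b) with hddef
  have hcy0 : c < y0 := max_lt hy0lu.1 hy0mem.1
  have hy0d : y0 < d := lt_min hy0lu.2 hy0mem.2
  have hcd : c < d := hcy0.trans hy0d
  have hbc : -b ≤ c := le_max_right _ _
  have hd1 : d ≤ 1 + b := min_le_right _ _
  have hc1 : c ≤ 1 + b := hcd.le.trans hd1
  have hbd : -b ≤ d := hbc.trans hcd.le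
  have hhii : IntervalIntegrable h volume (-b) (1+b) := by
    apply ContinuousOn.intervalIntegrable
    rwa [uIcc_of_le hbI]
  have hii1 : IntervalIntegrable h volume (-b) c :=
    hhii.mono_set (by rw [uIcc_of_le hbc, uIcc_of_le hbI]; exact Icc_subset_Icc le_rfl hc1)
  have hii2 : IntervalIntegrable h volume c d :=
    hhii.mono_set (by rw [uIcc_of_le hcd.le, uIcc_of_le hbI]; exact Icc_subset_Icc hbc hd1)
  have hii3 : IntervalIntegrable h volume d (1+b) :=
    hhii.mono_set (by rw [uIcc_of_le hd1, uIcc_of_le hbI]; exact Icc_subset_Icc hbd le_rfl)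
  have hii12 : IntervalIntegrable h volume (-b) d :=
    hhii.mono_set (by rw [uIcc_of_le hbd, uIcc_of_le hbI]; exact Icc_subset_Icc le_rfl hd1)
  have hsplit : (∫ y in (-b)..(1+b), h y)
      = (∫ y in (-b)..c, h y) + (∫ y in c..d, h y) + (∫ y in d..(1+b), h y) := by
    rw [intervalIntegral.integral_add_adjacent_intervals hii1 hii2,
      intervalIntegral.integral_add_adjacent_intervals hii12 hii3]
  have hpos2 : 0 < ∫ y in c..d, h y := by
    apply intervalIntegral.intervalIntegral_pos_of_pos_on hii2 _ hcd
    intro x hx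
    have hxlu : x ∈ Ioo l u := ⟨lt_of_le_of_lt (le_max_left _ _) hx.1,
      lt_of_lt_of_le hx.2 (min_le_left _ _)⟩
    have := hsub hxlu
    simp only [mem_preimage, mem_Ioi] at this
    exact lt_trans (half_pos hy0pos) this
  have hnn1 : 0 ≤ ∫ y in (-b)..c, h y :=
    intervalIntegral.integral_nonneg hbc
      (fun x hx => hhnn x ⟨hx.1, hx.2.trans hc1⟩)
  have hnn3 : 0 ≤ ∫ y in d..(1+b), h y :=
    intervalIntegral.integral_nonneg hd1
      (fun x hx => hhnn x ⟨hbd.trans hx.1, hx.2⟩)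
  have hintpos : 0 < ∫ y in (-b)..(1+b), h y := by
    rw [hsplit]; linarith
  -- rearrange
  have hiimix : IntervalIntegrable (fun y => negMulLog (t * q 0 y + (1 - t) * q 1 y))
      volume (-b) (1+b) := by
    apply ContinuousOn.intervalIntegrable
    rwa [uIcc_of_le hbI]
  have hiif : ∀ i, IntervalIntegrable (fun y => negMulLog (q i y)) volume (-b) (1+b) := by
    intro i
    apply ContinuousOn.intervalIntegrable
    rw [uIcc_of_le hbI]
    exact hcont0 i
  have hiicomb : IntervalIntegrable
      (fun y => t * negMulLog (q 0 y) + (1 - t) * negMulLog (q 1 y)) volume (-b) (1+b) :=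
    ((hiif 0).const_mul t).add ((hiif 1).const_mul (1 - t))
  have hdiff : (∫ y in (-b)..(1+b), h y)
      = (∫ y in (-b)..(1+b), negMulLog (t * q 0 y + (1 - t) * q 1 y))
        - ∫ y in (-b)..(1+b), (t * negMulLog (q 0 y) + (1 - t) * negMulLog (q 1 y)) := by
    rw [← intervalIntegral.integral_sub hiimix hiicomb]
  have hcomb : (∫ y in (-b)..(1+b), (t * negMulLog (q 0 y) + (1 - t) * negMulLog (q 1 y)))
      = t * (∫ y in (-b)..(1+b), negMulLog (q 0 y))
        + (1 - t) * (∫ y in (-b)..(1+b), negMulLog (q 1 y)) := by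
    rw [intervalIntegral.integral_add ((hiif 0).const_mul t) ((hiif 1).const_mul (1 - t)),
      intervalIntegral.integral_const_mul, intervalIntegral.integral_const_mul]
  rw [hdiff, hcomb] at hintpos
  linarith
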